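/- (Variable order rough integration) Let α : [0,T] → (1/3, 1), (X,𝕏) ∈ 𝒞^{α(·)}([0,T];ℝ^d) a variable order rough path, and (Y,Y′) ∈ D_X^{α(·)}([0,T];ℝⁿ) a controlled path. Setting Ξ(s,t) = Y_s X_{s,t} + Y′_s 𝕏_{s,t}, the sewing lemma applies (since δΞ(s,u,t) = Y′_{s,u} 𝕏_{u,t} + R^Y_{s,u} X_{u,t} has local order 3α(s) > 1), and the resulting rough integral satisfies |∫_s^t Y_r dX_r − Y_s X_{s,t} − Y′_s 𝕏_{s,t}| ≤ C |t−s|^β (‖X‖_{α(·)} + ‖𝕏‖_{2α(·)∧1}) ‖Y,Y′‖_{X,α(·)}, where β = inf_t 3α(t) ∧ (1 + inf α) > 1. -/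

import Mathlib

/-!
Chen's relation and the controlled expansion of `Y` give
`Ξ_{s,t} - Ξ_{s,u} - Ξ_{u,t} = (Y'_s - Y'_u) 𝕏_{u,t} - R^Y_{s,u} X_{u,t}`, and both terms are
`O(|t - s|^β)` because the exponent sums `α(s) + (2α(u) ∧ 1)` and `2α(s) + α(u)` lie in `[β, 3]`.

To sew a germ with `|Ξ_{s,t} - Ξ_{s,u} - Ξ_{u,t}| ≤ A |t - s|^β`, take its Riemann sums along the
dyadic grids of mesh `h = T / 2^n`, clamped to `[s, t]`. Halving the mesh changes such a sum by at
most `A h^(β-1) (t - s)`, so the sums converge to some `J(s,t)`; splitting `[r, t]` at `u` changes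
them by at most `A h^β`, so `J` is additive. On the coarsest grid with `h ≥ t - s` at most one grid
point lies in `(s, t)`, so there the sum is within `2A (t - s)^β` of `Ξ(s,t)`, and the remaining
geometric tail is `O(A h^(β-1) (t - s)) = O(A (t - s)^β)`.
-/

/-- The tensor product `a ⊗ b` of two vectors in `ℝ^d`, as an element of `ℝ^{d×d}`. -/
noncomputable def tensor {d : ℕ} (a b : EuclideanSpace ℝ (Fin d)) :
    EuclideanSpace ℝ (Fin d × Fin d) :=
  (WithLp.equiv 2 (Fin d × Fin d → ℝ)).symm fun p => a p.1 * b p.2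

open Finset Filter Topology

theorem tensor_zero_left {d : ℕ} (b : EuclideanSpace ℝ (Fin d)) : tensor 0 b = 0 := by
  ext p
  simp [tensor]

theorem rpow_le_rpow_sub_one_mul {x c β : ℝ} (hβ : 1 ≤ β) (hx : 0 ≤ x) (hxc : x ≤ c) :
    x ^ β ≤ c ^ (β - 1) * x := by
  calc x ^ β = x ^ (β - 1) * x := by
        rw [← Real.rpow_add_one' hx (by linarith), sub_add_cancel]
    _ ≤ c ^ (β - 1) * x := by gcongr

theorem div_two_pow_rpow {T : ℝ} (hT : 0 ≤ T) (γ : ℝ) (n : ℕ) :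
    (T / 2 ^ n) ^ γ = T ^ γ * ((2 : ℝ) ^ (-γ)) ^ n := by
  rw [Real.div_rpow hT (by positivity), Real.rpow_neg zero_le_two, inv_pow, div_eq_mul_inv,
    ← Real.rpow_natCast_mul zero_le_two, ← Real.rpow_mul_natCast zero_le_two, mul_comm (n : ℝ)]

theorem rpow_le_rpow_mul_rpow_of_le {x L β e k : ℝ} (hx : 0 ≤ x) (hxL : x ≤ L) (hL : 1 ≤ L)
    (hβ : 0 < β) (hβe : β ≤ e) (hek : e ≤ β + k) : x ^ e ≤ L ^ k * x ^ β := by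
  calc x ^ e = x ^ (e - β) * x ^ β := by
        rw [← Real.rpow_add' hx (by linarith), sub_add_cancel]
    _ ≤ L ^ (e - β) * x ^ β := by gcongr
    _ ≤ L ^ k * x ^ β := by gcongr; linarith

theorem rpow_mul_rpow_le {s u t L β a b : ℝ} (hsu : s ≤ u) (hut : u ≤ t) (htL : t - s ≤ L)
    (hL : 1 ≤ L) (ha : 0 ≤ a) (hb : 0 ≤ b) (hβ : 0 < β) (hβab : β ≤ a + b)
    (hab : a + b ≤ β + 2) : (u - s) ^ a * (t - u) ^ b ≤ L ^ (2 : ℝ) * (t - s) ^ β :=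
  calc (u - s) ^ a * (t - u) ^ b ≤ (t - s) ^ a * (t - s) ^ b :=
        mul_le_mul (by gcongr) (by gcongr)
          (Real.rpow_nonneg (by linarith) _) (Real.rpow_nonneg (by linarith) _)
    _ = (t - s) ^ (a + b) := (Real.rpow_add' (by linarith) (by linarith)).symm
    _ ≤ L ^ (2 : ℝ) * (t - s) ^ β := rpow_le_rpow_mul_rpow_of_le (by linarith) htL hL hβ hβab hab

theorem norm_le_mul_rpow_of_forall_lt {F : Type*} [SeminormedAddCommGroup F] {f : ℝ → ℝ → F}
    {a : ℝ → ℝ} {K T : ℝ} (ha : ∀ s, 0 ≤ s → s ≤ T → 0 < a s)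
    (hdiag : ∀ s, 0 ≤ s → s ≤ T → f s s = 0)
    (h : ∀ s t, 0 ≤ s → s < t → t ≤ T → ‖f s t‖ ≤ K * (t - s) ^ a s) (s t : ℝ) (hs : 0 ≤ s)
    (hst : s ≤ t) (htT : t ≤ T) : ‖f s t‖ ≤ K * (t - s) ^ a s := by
  rcases hst.eq_or_lt with rfl | hlt
  · simp [hdiag s hs htT, Real.zero_rpow (ha s hs htT).ne']
  · exact h s t hs hlt htT

namespace Sewing

variable {E : Type*} [NormedAddCommGroup E]

def DefectBound (Ξ : ℝ → ℝ → E) (T A β : ℝ) : Prop :=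
  ∀ s u t : ℝ, 0 ≤ s → s ≤ u → u ≤ t → t ≤ T → ‖Ξ s t - Ξ s u - Ξ u t‖ ≤ A * (t - s) ^ β

theorem DefectBound.apply_self_eq_zero {Ξ : ℝ → ℝ → E} {T A β : ℝ} (hΞ : DefectBound Ξ T A β)
    (hβ : 0 < β) {x : ℝ} (hx : 0 ≤ x) (hxT : x ≤ T) : Ξ x x = 0 := by
  have h := hΞ x x x hx le_rfl le_rfl hxT
  rwa [sub_self, sub_self, Real.zero_rpow hβ.ne', mul_zero, zero_sub, norm_neg,
    norm_le_zero_iff] at h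

def riemannSum (Ξ : ℝ → ℝ → E) (p : ℕ → ℝ) (M : ℕ) : E :=
  ∑ i ∈ range M, Ξ (p i) (p (i + 1))

theorem riemannSum_eq_of_two_valued {Ξ : ℝ → ℝ → E} {p : ℕ → ℝ} {a b : ℝ} (hp : Monotone p)
    (hab : ∀ i, p i = a ∨ p i = b) (ha : Ξ a a = 0) (hb : Ξ b b = 0) (M : ℕ) :
    riemannSum Ξ p M = Ξ (p 0) (p M) := by
  induction M with
  | zero => rcases hab 0 with h | h <;> simp [riemannSum, h, ha, hb]
  | succ M ih =>
    rw [riemannSum, sum_range_succ, ← riemannSum, ih]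
    have hdiag : ∀ i, Ξ (p i) (p i) = 0 := fun i ↦ by
      rcases hab i with h | h <;> rw [h] <;> assumption
    by_cases hM : p M = p (M + 1)
    · rw [← hM, hdiag, add_zero]
    · have h0M : p 0 = p M := by
        have := hp (Nat.zero_le M)
        have := hp (Nat.le_succ M)
        -- otherwise `p 0 < p M < p (M + 1)` would be three distinct values
        grind
      rw [h0M, hdiag, zero_add]

theorem riemannSum_two_mul (Ξ : ℝ → ℝ → E) (p : ℕ → ℝ) (M : ℕ) :
    riemannSum Ξ p (2 * M) = riemannSum Ξ (fun j ↦ p (2 * j)) M +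
      ∑ j ∈ range M, (Ξ (p (2 * j)) (p (2 * j + 1)) + Ξ (p (2 * j + 1)) (p (2 * j + 2)) -
        Ξ (p (2 * j)) (p (2 * j + 2))) := by
  induction M with
  | zero => simp [riemannSum]
  | succ M ih =>
    rw [Nat.mul_succ, riemannSum, sum_range_succ, sum_range_succ, ← riemannSum, ih]
    simp only [riemannSum, sum_range_succ]
    rw [show 2 * (M + 1) = 2 * M + 2 by ring]
    abel

theorem germ_sub_min_sub_max_eq_zero {Ξ : ℝ → ℝ → E} {u x y : ℝ} (hu : Ξ u u = 0)
    (hxy : x ≤ y) (h : ¬(x < u ∧ u < y)) :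
    Ξ x y - Ξ (min x u) (min y u) - Ξ (max x u) (max y u) = 0 := by
  rcases le_or_gt u x with hux | hxu
  · rw [min_eq_right hux, min_eq_right (hux.trans hxy), max_eq_left hux,
      max_eq_left (hux.trans hxy), hu]
    abel
  · have hyu : y ≤ u := not_lt.1 fun huy ↦ h ⟨hxu, huy⟩
    rw [min_eq_left hxu.le, min_eq_left hyu, max_eq_right hxu.le, max_eq_right hyu, hu]
    abel

theorem norm_riemannSum_sub_min_sub_max_le {Ξ : ℝ → ℝ → E} {p : ℕ → ℝ} {T A β c u : ℝ}
    (hΞ : DefectBound Ξ T A β) (hβ : 0 < β) (hA : 0 ≤ A) (hp : Monotone p) (hp0 : 0 ≤ p 0)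
    (hpT : ∀ i, p i ≤ T) (hstep : ∀ i, p (i + 1) - p i ≤ c) (hu0 : 0 ≤ u) (huT : u ≤ T)
    (M : ℕ) :
    ‖riemannSum Ξ p M - riemannSum Ξ (fun i ↦ min (p i) u) M -
      riemannSum Ξ (fun i ↦ max (p i) u) M‖ ≤ A * c ^ β := by
  set D : ℕ → E := fun i ↦ Ξ (p i) (p (i + 1)) - Ξ (min (p i) u) (min (p (i + 1)) u) -
    Ξ (max (p i) u) (max (p (i + 1)) u)
  have hmono : ∀ i, p i ≤ p (i + 1) := fun i ↦ hp (Nat.le_succ i)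
  have hc : 0 ≤ c := (sub_nonneg.2 (hmono 0)).trans (hstep 0)
  have hD : ∀ i, D i ≠ 0 → p i < u ∧ u < p (i + 1) := fun i hi ↦ by
    by_contra h
    exact hi (germ_sub_min_sub_max_eq_zero (hΞ.apply_self_eq_zero hβ hu0 huT) (hmono i) h)
  have hDle : ∀ i, ‖D i‖ ≤ A * c ^ β := fun i ↦ by
    by_cases hi : D i = 0
    · rw [hi, norm_zero]
      positivity
    obtain ⟨hiu, hui⟩ := hD i hi
    calc ‖D i‖ = ‖Ξ (p i) (p (i + 1)) - Ξ (p i) u - Ξ u (p (i + 1))‖ := by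
          simp only [D, min_eq_left hiu.le, min_eq_right hui.le, max_eq_right hiu.le,
            max_eq_left hui.le]
      _ ≤ A * (p (i + 1) - p i) ^ β :=
          hΞ _ _ _ (hp0.trans (hp (Nat.zero_le i))) hiu.le hui.le (hpT _)
      _ ≤ A * c ^ β := by gcongr; exacts [sub_nonneg.2 (hmono i), hstep i]
  have hcard : #{i ∈ range M | p i < u ∧ u < p (i + 1)} ≤ 1 := by
    refine card_le_one.2 fun i hi j hj ↦ ?_
    simp only [mem_filter] at hi hj
    by_contra hij
    rcases Nat.lt_or_gt_of_ne hij with h | h <;> linarith [hp (Nat.succ_le_of_lt h)]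
  calc _ = ‖∑ i ∈ range M, D i‖ := by simp only [riemannSum, D, ← sum_sub_distrib]
    _ = ‖∑ i ∈ range M with p i < u ∧ u < p (i + 1), D i‖ := by
        rw [sum_filter_of_ne fun i _ ↦ hD i]
    _ ≤ ∑ i ∈ range M with p i < u ∧ u < p (i + 1), ‖D i‖ := norm_sum_le _ _
    _ ≤ #{i ∈ range M | p i < u ∧ u < p (i + 1)} • (A * c ^ β) := sum_le_card_nsmul _ _ _
        fun i _ ↦ hDle i
    _ ≤ A * c ^ β := by
        rw [nsmul_eq_mul]
        exact mul_le_of_le_one_left (by positivity) (by exact_mod_cast hcard)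

theorem norm_riemannSum_two_mul_sub_le {Ξ : ℝ → ℝ → E} {p : ℕ → ℝ} {T A β c : ℝ}
    (hΞ : DefectBound Ξ T A β) (hβ : 1 < β) (hA : 0 ≤ A) (hp : Monotone p) (hp0 : 0 ≤ p 0)
    (hpT : ∀ i, p i ≤ T) (hstep : ∀ j, p (2 * j + 2) - p (2 * j) ≤ c) (M : ℕ) :
    ‖riemannSum Ξ p (2 * M) - riemannSum Ξ (fun j ↦ p (2 * j)) M‖ ≤
      A * c ^ (β - 1) * (p (2 * M) - p 0) := by
  rw [riemannSum_two_mul, add_sub_cancel_left]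
  calc _ ≤ ∑ j ∈ range M, A * c ^ (β - 1) * (p (2 * (j + 1)) - p (2 * j)) := by
        refine norm_sum_le_of_le _ fun j _ ↦ ?_
        have h1 : p (2 * j) ≤ p (2 * j + 1) := hp (Nat.le_succ _)
        have h2 : p (2 * j + 1) ≤ p (2 * j + 2) := hp (Nat.le_succ _)
        rw [← norm_neg, show 2 * (j + 1) = 2 * j + 2 by ring]
        calc _ = ‖Ξ (p (2 * j)) (p (2 * j + 2)) - Ξ (p (2 * j)) (p (2 * j + 1)) -
              Ξ (p (2 * j + 1)) (p (2 * j + 2))‖ := by congr 1; abel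
          _ ≤ A * (p (2 * j + 2) - p (2 * j)) ^ β :=
              hΞ _ _ _ (hp0.trans (hp (Nat.zero_le _))) h1 h2 (hpT _)
          _ ≤ A * (c ^ (β - 1) * (p (2 * j + 2) - p (2 * j))) := by
              gcongr
              exact rpow_le_rpow_sub_one_mul hβ.le (by linarith) (hstep j)
          _ = _ := by ring
    _ = A * c ^ (β - 1) * (p (2 * M) - p 0) := by
        rw [← mul_sum, sum_range_sub (fun j ↦ p (2 * j))]

noncomputable def clampGrid (h s t : ℝ) (i : ℕ) : ℝ := max s (min (i * h) t)

noncomputable def gridSum (Ξ : ℝ → ℝ → E) (h : ℝ) (M : ℕ) (s t : ℝ) : E :=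
  riemannSum Ξ (clampGrid h s t) M

section clampGrid

variable {h s t : ℝ}

theorem clampGrid_mono (hh : 0 ≤ h) : Monotone (clampGrid h s t) := fun i j hij ↦
  max_le_max le_rfl (min_le_min (by gcongr) le_rfl)

theorem clampGrid_zero (hs : 0 ≤ s) : clampGrid h s t 0 = s := by
  simp [clampGrid, hs]

theorem clampGrid_of_le_mul (hst : s ≤ t) {i : ℕ} (hi : t ≤ i * h) : clampGrid h s t i = t := by
  simp [clampGrid, hi, hst]

theorem clampGrid_le (hst : s ≤ t) (i : ℕ) : clampGrid h s t i ≤ t :=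
  max_le hst (min_le_right _ _)

theorem clampGrid_succ_sub_le (hh : 0 ≤ h) (hst : s ≤ t) (i : ℕ) :
    clampGrid h s t (i + 1) - clampGrid h s t i ≤ min h (t - s) := by
  have : (i : ℝ) * h ≤ (i + 1 : ℕ) * h := by gcongr; omega
  simp only [clampGrid, Nat.cast_succ] at *
  grind

theorem min_clampGrid {r u : ℝ} (hru : r ≤ u) (hut : u ≤ t) (i : ℕ) :
    min (clampGrid h r t i) u = clampGrid h r u i := by
  simp only [clampGrid]
  grind

theorem max_clampGrid {r u : ℝ} (hru : r ≤ u) (i : ℕ) :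
    max (clampGrid h r t i) u = clampGrid h u t i := by
  simp only [clampGrid]
  grind

end clampGrid

section gridSum

variable {Ξ : ℝ → ℝ → E} {T A β h : ℝ} {M : ℕ}

theorem gridSum_eq_of_forall_le_or_le (hΞ : DefectBound Ξ T A β) (hβ : 0 < β) (hh : 0 ≤ h)
    {s t : ℝ} (hs : 0 ≤ s) (hst : s ≤ t) (htT : t ≤ T) (htM : t ≤ M * h)
    (hgap : ∀ i : ℕ, i * h ≤ s ∨ t ≤ i * h) :
    gridSum Ξ h M s t = Ξ s t := by
  have hvals : ∀ i, clampGrid h s t i = s ∨ clampGrid h s t i = t := fun i ↦ by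
    rcases hgap i with hi | hi
    · exact Or.inl (max_eq_left ((min_le_left _ _).trans hi))
    · exact Or.inr (clampGrid_of_le_mul hst hi)
  rw [gridSum, riemannSum_eq_of_two_valued (clampGrid_mono hh) hvals
    (hΞ.apply_self_eq_zero hβ hs (hst.trans htT)) (hΞ.apply_self_eq_zero hβ (hs.trans hst) htT),
    clampGrid_zero hs, clampGrid_of_le_mul hst htM]

theorem norm_gridSum_sub_gridSum_sub_gridSum_le (hΞ : DefectBound Ξ T A β) (hβ : 0 < β)
    (hA : 0 ≤ A) (hh : 0 ≤ h) {r u t : ℝ} (hr : 0 ≤ r) (hru : r ≤ u) (hut : u ≤ t)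
    (htT : t ≤ T) (M : ℕ) :
    ‖gridSum Ξ h M r t - gridSum Ξ h M r u - gridSum Ξ h M u t‖ ≤ A * min h (t - r) ^ β := by
  have := norm_riemannSum_sub_min_sub_max_le hΞ hβ hA (clampGrid_mono hh)
    (hr.trans (le_max_left _ _)) (fun i ↦ (clampGrid_le (hru.trans hut) i).trans htT)
    (clampGrid_succ_sub_le hh (hru.trans hut)) (hr.trans hru) (hut.trans htT) M
  simp only [min_clampGrid hru hut, max_clampGrid hru] at this
  exact this

theorem norm_gridSum_half_sub_le (hΞ : DefectBound Ξ T A β) (hβ : 1 < β) (hA : 0 ≤ A)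
    (hh : 0 ≤ h) {s t : ℝ} (hs : 0 ≤ s) (hst : s ≤ t) (htT : t ≤ T) (htM : t ≤ M * h) :
    ‖gridSum Ξ (h / 2) (2 * M) s t - gridSum Ξ h M s t‖ ≤ A * h ^ (β - 1) * (t - s) := by
  have heven : ∀ j, clampGrid (h / 2) s t (2 * j) = clampGrid h s t j := fun j ↦ by
    simp only [clampGrid]
    push_cast
    ring_nf
  have := norm_riemannSum_two_mul_sub_le (p := clampGrid (h / 2) s t) (c := h) hΞ hβ hA
    (clampGrid_mono (by positivity)) (hs.trans (le_max_left _ _))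
    (fun i ↦ (clampGrid_le hst i).trans htT)
    (fun j ↦ by
      rw [heven, show 2 * j + 2 = 2 * (j + 1) by ring, heven]
      exact (clampGrid_succ_sub_le hh hst j).trans (min_le_left _ _)) M
  rwa [show (fun j ↦ clampGrid (h / 2) s t (2 * j)) = clampGrid h s t from funext heven, heven,
    clampGrid_zero hs, clampGrid_of_le_mul hst htM] at this

theorem norm_gridSum_sub_le_of_sub_le (hΞ : DefectBound Ξ T A β) (hβ : 0 < β) (hA : 0 ≤ A)
    {s t : ℝ} (hs : 0 ≤ s) (hst : s ≤ t) (htT : t ≤ T) (htM : t ≤ M * h) (hmesh : t - s ≤ h) :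
    ‖gridSum Ξ h M s t - Ξ s t‖ ≤ 2 * A * (t - s) ^ β := by
  rcases hst.eq_or_lt with rfl | hlt
  · rw [gridSum_eq_of_forall_le_or_le hΞ hβ (by linarith) hs le_rfl htT htM
      fun i ↦ le_total _ _, sub_self, norm_zero]
    positivity
  have hh : 0 < h := by linarith
  set k := ⌊s / h⌋₊
  have hk : (k : ℝ) * h ≤ s := (le_div_iff₀ hh).1 (Nat.floor_le (by positivity))
  have hk1 : s < (k + 1) * h := (div_lt_iff₀ hh).1 (Nat.lt_floor_add_one _)
  -- neither `(s, u)` nor `(u, t)` contains a grid point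
  set u := min ((k + 1) * h) t
  have hsu : s ≤ u := le_min hk1.le hst
  have hut : u ≤ t := min_le_right _ _
  have hleft : gridSum Ξ h M s u = Ξ s u :=
    gridSum_eq_of_forall_le_or_le hΞ hβ hh.le hs hsu (hut.trans htT) (hut.trans htM) fun i ↦ by
      rcases le_or_gt i k with hi | hi
      · exact Or.inl (le_trans (by gcongr) hk)
      · refine Or.inr ((min_le_left _ _).trans ?_)
        gcongr
        exact_mod_cast hi
  have hright : gridSum Ξ h M u t = Ξ u t :=
    gridSum_eq_of_forall_le_or_le hΞ hβ hh.le (hs.trans hsu) hut htT htM fun i ↦ by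
      rcases le_or_gt i (k + 1) with hi | hi
      · by_cases hit : i * h ≤ t
        · exact Or.inl (le_min (by gcongr; exact_mod_cast hi) hit)
        · exact Or.inr (not_le.1 hit).le
      · have : ((k : ℝ) + 2) * h ≤ i * h := by gcongr; exact_mod_cast hi
        exact Or.inr (by linarith)
  calc ‖gridSum Ξ h M s t - Ξ s t‖
      = ‖(gridSum Ξ h M s t - gridSum Ξ h M s u - gridSum Ξ h M u t) -
          (Ξ s t - Ξ s u - Ξ u t)‖ := by rw [hleft, hright]; congr 1; abel
    _ ≤ A * min h (t - s) ^ β + A * (t - s) ^ β := (norm_sub_le _ _).trans (add_le_add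
        (norm_gridSum_sub_gridSum_sub_gridSum_le hΞ hβ hA hh.le hs hsu hut htT M)
        (hΞ s u t hs hsu hut htT))
    _ = 2 * A * (t - s) ^ β := by rw [min_eq_right hmesh]; ring

end gridSum

theorem natCast_two_pow_mul_div_two_pow (T : ℝ) (n : ℕ) : ((2 ^ n : ℕ) : ℝ) * (T / 2 ^ n) = T := by
  push_cast
  field_simp

noncomputable def dyadicSum (Ξ : ℝ → ℝ → E) (T : ℝ) (n : ℕ) (s t : ℝ) : E :=
  gridSum Ξ (T / 2 ^ n) (2 ^ n) s t

section dyadicSum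

variable {Ξ : ℝ → ℝ → E} {T A β s t : ℝ}

theorem dyadicSum_self (hΞ : DefectBound Ξ T A β) (hβ : 0 < β) (hs : 0 ≤ s) (hsT : s ≤ T)
    (n : ℕ) : dyadicSum Ξ T n s s = Ξ s s :=
  gridSum_eq_of_forall_le_or_le hΞ hβ (div_nonneg (hs.trans hsT) (by positivity)) hs le_rfl hsT
    (hsT.trans_eq (natCast_two_pow_mul_div_two_pow T n).symm) fun _ ↦ le_total _ _

theorem dist_dyadicSum_succ_le (hΞ : DefectBound Ξ T A β) (hβ : 1 < β) (hA : 0 ≤ A)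
    (hs : 0 ≤ s) (hst : s ≤ t) (htT : t ≤ T) (n : ℕ) :
    dist (dyadicSum Ξ T n s t) (dyadicSum Ξ T (n + 1) s t) ≤
      A * T ^ (β - 1) * (t - s) * ((2 : ℝ) ^ (-(β - 1))) ^ n := by
  have hT : 0 ≤ T := hs.trans (hst.trans htT)
  have := norm_gridSum_half_sub_le hΞ hβ hA (div_nonneg hT (by positivity)) hs hst htT
    (htT.trans_eq (natCast_two_pow_mul_div_two_pow T n).symm)
  rw [div_div, ← pow_succ, ← pow_succ', div_two_pow_rpow hT] at this
  rw [dist_comm, dist_eq_norm, dyadicSum, dyadicSum]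
  linarith

theorem cauchySeq_dyadicSum (hΞ : DefectBound Ξ T A β) (hβ : 1 < β) (hA : 0 ≤ A)
    (hs : 0 ≤ s) (hst : s ≤ t) (htT : t ≤ T) : CauchySeq (dyadicSum Ξ T · s t) :=
  cauchySeq_of_le_geometric _ _ (Real.rpow_lt_one_of_one_lt_of_neg one_lt_two (by linarith))
    (dist_dyadicSum_succ_le hΞ hβ hA hs hst htT)

noncomputable def sewingLimit (Ξ : ℝ → ℝ → E) (T s t : ℝ) : E :=
  limUnder atTop (dyadicSum Ξ T · s t)

variable [CompleteSpace E]

theorem tendsto_sewingLimit (hΞ : DefectBound Ξ T A β) (hβ : 1 < β) (hA : 0 ≤ A)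
    (hs : 0 ≤ s) (hst : s ≤ t) (htT : t ≤ T) :
    Tendsto (dyadicSum Ξ T · s t) atTop (𝓝 (sewingLimit Ξ T s t)) :=
  (cauchySeq_dyadicSum hΞ hβ hA hs hst htT).tendsto_limUnder

theorem sewingLimit_add (hΞ : DefectBound Ξ T A β) (hβ : 1 < β) (hA : 0 ≤ A) {r u : ℝ}
    (hr : 0 ≤ r) (hru : r ≤ u) (hut : u ≤ t) (htT : t ≤ T) :
    sewingLimit Ξ T r t = sewingLimit Ξ T r u + sewingLimit Ξ T u t := by
  have hT : 0 ≤ T := hr.trans (hru.trans (hut.trans htT))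
  have hdefect : Tendsto (fun n ↦ dyadicSum Ξ T n r t - dyadicSum Ξ T n r u -
      dyadicSum Ξ T n u t) atTop (𝓝 0) := by
    refine squeeze_zero_norm (fun n ↦ (norm_gridSum_sub_gridSum_sub_gridSum_le hΞ
      (by linarith) hA (by positivity) hr hru hut htT _).trans ?_) (a := fun n ↦
        A * T ^ β * ((2 : ℝ) ^ (-β)) ^ n) ?_
    · rw [mul_assoc, ← div_two_pow_rpow hT]
      gcongr
      exacts [le_min (by positivity) (by linarith), min_le_left _ _]
    · simpa using (tendsto_pow_atTop_nhds_zero_of_lt_one (by positivity)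
        (Real.rpow_lt_one_of_one_lt_of_neg one_lt_two (by linarith))).const_mul (A * T ^ β)
  have := tendsto_nhds_unique (((tendsto_sewingLimit hΞ hβ hA hr (hru.trans hut) htT).sub
    (tendsto_sewingLimit hΞ hβ hA hr hru (hut.trans htT))).sub
      (tendsto_sewingLimit hΞ hβ hA (hr.trans hru) hut htT)) hdefect
  rwa [sub_sub, sub_eq_zero] at this

theorem norm_sewingLimit_sub_le (hΞ : DefectBound Ξ T A β) (hβ : 1 < β) (hA : 0 ≤ A)
    (hs : 0 ≤ s) (hst : s ≤ t) (htT : t ≤ T) :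
    ‖sewingLimit Ξ T s t - Ξ s t‖ ≤
      (2 ^ (β - 1) / (1 - (2 : ℝ) ^ (-(β - 1))) + 2) * A * (t - s) ^ β := by
  have hr : 0 < 1 - (2 : ℝ) ^ (-(β - 1)) :=
    sub_pos.2 (Real.rpow_lt_one_of_one_lt_of_neg one_lt_two (by linarith))
  rcases hst.eq_or_lt with rfl | hlt
  · rw [tendsto_nhds_unique (tendsto_sewingLimit hΞ hβ hA hs le_rfl htT)
      (tendsto_const_nhds.congr fun n ↦ (dyadicSum_self hΞ (by linarith) hs htT n).symm),
      sub_self, norm_zero]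
    positivity
  have hts : 0 < t - s := sub_pos.2 hlt
  have hT : 0 < T := by linarith
  -- the coarsest dyadic level whose mesh `T / 2 ^ n` is still at least `t - s`
  obtain ⟨n, hn1, hn2⟩ :=
    exists_nat_pow_near (x := T / (t - s)) ((one_le_div hts).2 (by linarith)) one_lt_two
  have hmesh : t - s ≤ T / 2 ^ n := by
    rw [le_div_iff₀ hts] at hn1
    rw [le_div_iff₀ (by positivity)]
    linarith
  have hmesh' : T / 2 ^ n ≤ 2 * (t - s) := by
    rw [div_lt_iff₀ hts, pow_succ] at hn2
    rw [div_le_iff₀ (by positivity)]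
    linarith
  have htail := dist_le_of_le_geometric_of_tendsto _ _
    (Real.rpow_lt_one_of_one_lt_of_neg one_lt_two (by linarith))
    (dist_dyadicSum_succ_le hΞ hβ hA hs hst htT) (tendsto_sewingLimit hΞ hβ hA hs hst htT) n
  have hcoarse : ‖dyadicSum Ξ T n s t - Ξ s t‖ ≤ 2 * A * (t - s) ^ β :=
    norm_gridSum_sub_le_of_sub_le hΞ (by linarith) hA hs hst htT
    (htT.trans_eq (natCast_two_pow_mul_div_two_pow T n).symm) hmesh
  calc ‖sewingLimit Ξ T s t - Ξ s t‖
      ≤ dist (dyadicSum Ξ T n s t) (sewingLimit Ξ T s t) + ‖dyadicSum Ξ T n s t - Ξ s t‖ := by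
        rw [dist_comm, dist_eq_norm]
        exact norm_sub_le_norm_sub_add_norm_sub _ _ _
    _ ≤ A * T ^ (β - 1) * (t - s) * (2 ^ (-(β - 1))) ^ n / (1 - 2 ^ (-(β - 1))) +
          2 * A * (t - s) ^ β := add_le_add htail hcoarse
    _ = A * (T / 2 ^ n) ^ (β - 1) * (t - s) / (1 - 2 ^ (-(β - 1))) + 2 * A * (t - s) ^ β := by
        rw [div_two_pow_rpow hT.le]
        ring
    _ ≤ A * (2 * (t - s)) ^ (β - 1) * (t - s) / (1 - 2 ^ (-(β - 1))) + 2 * A * (t - s) ^ β := by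
        gcongr
    _ = _ := by
        have : (t - s) ^ β = (t - s) ^ (β - 1) * (t - s) := by
          rw [← Real.rpow_add_one' hts.le (by linarith), sub_add_cancel]
        rw [Real.mul_rpow zero_le_two hts.le, this]
        field_simp

end dyadicSum

theorem exists_sewing [CompleteSpace E] {Ξ : ℝ → ℝ → E} {T A β : ℝ}
    (hΞ : DefectBound Ξ T A β) (hβ : 1 < β) (hA : 0 ≤ A) :
    ∃ C > (0 : ℝ), ∃ I : ℝ → E, I 0 = 0 ∧ ∀ s t : ℝ, 0 ≤ s → s ≤ t → t ≤ T →
      ‖I t - I s - Ξ s t‖ ≤ C * A * (t - s) ^ β := by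
  have hr : 0 < 1 - (2 : ℝ) ^ (-(β - 1)) :=
    sub_pos.2 (Real.rpow_lt_one_of_one_lt_of_neg one_lt_two (by linarith))
  -- subtracting `sewingLimit Ξ T 0 0` gives `I 0 = 0` even when `T < 0`
  refine ⟨2 ^ (β - 1) / (1 - 2 ^ (-(β - 1))) + 2, by positivity,
    fun t ↦ sewingLimit Ξ T 0 t - sewingLimit Ξ T 0 0, sub_self _, fun s t hs hst htT ↦ ?_⟩
  rw [sub_sub_sub_cancel_right, sewingLimit_add hΞ hβ hA le_rfl hs hst htT, add_sub_cancel_left]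
  exact norm_sewingLimit_sub_le hΞ hβ hA hs hst htT

end Sewing

section RoughIntegral

variable {V W F : Type*} [NormedAddCommGroup V] [NormedSpace ℝ V] [NormedAddCommGroup W]
  [NormedSpace ℝ W] [NormedAddCommGroup F] [NormedSpace ℝ F]

def compensatedGerm (X : ℝ → V) (XX : ℝ → ℝ → W) (Y : ℝ → V →L[ℝ] F)
    (Y' : ℝ → W →L[ℝ] F) (s t : ℝ) : F :=
  Y s (X t - X s) + Y' s (XX s t)

theorem compensatedGerm_defect_eq {X : ℝ → V} {XX : ℝ → ℝ → W} {Y : ℝ → V →L[ℝ] F}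
    {Y' : ℝ → W →L[ℝ] F} {R : ℝ → ℝ → V →L[ℝ] F} {τ : V → V → W} {s u t : ℝ}
    (hctrl : Y u (X t - X u) - Y s (X t - X u) =
      Y' s (τ (X u - X s) (X t - X u)) + R s u (X t - X u))
    (hChen : XX s t - XX s u - XX u t = τ (X u - X s) (X t - X u)) :
    compensatedGerm X XX Y Y' s t - compensatedGerm X XX Y Y' s u -
        compensatedGerm X XX Y Y' u t =
      (Y' s - Y' u) (XX u t) - R s u (X t - X u) := by
  have hX : X t - X s = (X t - X u) + (X u - X s) := by abel
  have hXX : XX s t = XX s u + XX u t + τ (X u - X s) (X t - X u) := by rw [← hChen]; abel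
  simp only [compensatedGerm, hX, hXX, map_add, sub_apply]
  rw [eq_add_of_sub_eq hctrl]
  abel

theorem norm_compensatedGerm_defect_le {X : ℝ → V} {XX : ℝ → ℝ → W} {Y : ℝ → V →L[ℝ] F}
    {Y' : ℝ → W →L[ℝ] F} {R : ℝ → ℝ → V →L[ℝ] F} {τ : V → V → W} {s u t a b β L KX KXX KY : ℝ}
    (hsu : s ≤ u) (hut : u ≤ t) (htL : t - s ≤ L) (hL : 1 ≤ L) (hβ : 1 < β) (ha : a < 1)
    (hb : b < 1) (hβa : β ≤ 3 * a) (hβb : β ≤ 3 * b) (hβa' : β ≤ 1 + a)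
    (hKX : 0 ≤ KX) (hKXX : 0 ≤ KXX) (hKY : 0 ≤ KY)
    (hX : ‖X t - X u‖ ≤ KX * (t - u) ^ b) (hXX : ‖XX u t‖ ≤ KXX * (t - u) ^ min (2 * b) 1)
    (hY' : ‖Y' u - Y' s‖ ≤ KY * (u - s) ^ a) (hR : ‖R s u‖ ≤ KY * (u - s) ^ (2 * a))
    (hctrl : Y u (X t - X u) - Y s (X t - X u) =
      Y' s (τ (X u - X s) (X t - X u)) + R s u (X t - X u))
    (hChen : XX s t - XX s u - XX u t = τ (X u - X s) (X t - X u)) :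
    ‖compensatedGerm X XX Y Y' s t - compensatedGerm X XX Y Y' s u -
        compensatedGerm X XX Y Y' u t‖ ≤ L ^ (2 : ℝ) * ((KX + KXX) * KY) * (t - s) ^ β := by
  have hmin : β ≤ a + min (2 * b) 1 := by
    rcases min_cases (2 * b) 1 with ⟨h, -⟩ | ⟨h, -⟩ <;> rw [h] <;> linarith
  rw [compensatedGerm_defect_eq hctrl hChen]
  calc _ ≤ ‖Y' u - Y' s‖ * ‖XX u t‖ + ‖R s u‖ * ‖X t - X u‖ := by
        refine (norm_sub_le _ _).trans (add_le_add ?_ ((R s u).le_opNorm _))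
        rw [← norm_neg, ← neg_apply, neg_sub]
        exact (Y' u - Y' s).le_opNorm _
    _ ≤ KY * (u - s) ^ a * (KXX * (t - u) ^ min (2 * b) 1) +
          KY * (u - s) ^ (2 * a) * (KX * (t - u) ^ b) := by
        gcongr
    _ = KY * KXX * ((u - s) ^ a * (t - u) ^ min (2 * b) 1) +
          KY * KX * ((u - s) ^ (2 * a) * (t - u) ^ b) := by ring
    _ ≤ KY * KXX * (L ^ (2 : ℝ) * (t - s) ^ β) + KY * KX * (L ^ (2 : ℝ) * (t - s) ^ β) := by
        refine add_le_add (mul_le_mul_of_nonneg_left ?_ (by positivity))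
          (mul_le_mul_of_nonneg_left ?_ (by positivity))
        · exact rpow_mul_rpow_le hsu hut htL hL (by linarith) (le_min (by linarith) zero_le_one)
            (by linarith) hmin (by linarith [min_le_right (2 * b) 1])
        · exact rpow_mul_rpow_le hsu hut htL hL (by linarith) (by linarith) (by linarith)
            (by linarith) (by linarith)
    _ = _ := by ring

end RoughIntegral

theorem stmt13_general {d n : ℕ} (T : ℝ)
    (α : ℝ → ℝ) (hα : ∀ t ∈ Set.Icc (0:ℝ) T, 1/3 < α t ∧ α t < 1)
    (β : ℝ) (hβ : 1 < β)
    (hβle : ∀ t ∈ Set.Icc (0:ℝ) T, β ≤ 3 * α t ∧ β ≤ 1 + α t)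
    (X : ℝ → EuclideanSpace ℝ (Fin d))
    (XX : ℝ → ℝ → EuclideanSpace ℝ (Fin d × Fin d))
    (KX KXX : ℝ) (hKX : 0 ≤ KX) (hKXX : 0 ≤ KXX)
    (hX : ∀ s t : ℝ, 0 ≤ s → s < t → t ≤ T → ‖X t - X s‖ ≤ KX * (t - s) ^ α s)
    (hXX : ∀ s t : ℝ, 0 ≤ s → s < t → t ≤ T →
      ‖XX s t‖ ≤ KXX * (t - s) ^ min (2 * α s) 1)
    (hChen : ∀ s u t : ℝ, 0 ≤ s → s ≤ u → u ≤ t → t ≤ T →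
      XX s t - XX s u - XX u t = tensor (X u - X s) (X t - X u))
    (Y : ℝ → (EuclideanSpace ℝ (Fin d) →L[ℝ] EuclideanSpace ℝ (Fin n)))
    (Y' : ℝ → (EuclideanSpace ℝ (Fin d × Fin d) →L[ℝ] EuclideanSpace ℝ (Fin n)))
    (R : ℝ → ℝ → (EuclideanSpace ℝ (Fin d) →L[ℝ] EuclideanSpace ℝ (Fin n)))
    (hctrl : ∀ s t : ℝ, 0 ≤ s → s ≤ t → t ≤ T → ∀ v : EuclideanSpace ℝ (Fin d),
      Y t v - Y s v = Y' s (tensor (X t - X s) v) + R s t v)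
    (KY : ℝ) (hKY : 0 ≤ KY)
    (hY' : ∀ s t : ℝ, 0 ≤ s → s < t → t ≤ T → ‖Y' t - Y' s‖ ≤ KY * (t - s) ^ α s)
    (hR : ∀ s t : ℝ, 0 ≤ s → s < t → t ≤ T → ‖R s t‖ ≤ KY * (t - s) ^ (2 * α s)) :
    ∃ C > (0:ℝ), ∃ I : ℝ → EuclideanSpace ℝ (Fin n), I 0 = 0 ∧
      ∀ s t : ℝ, 0 ≤ s → s ≤ t → t ≤ T →
        ‖(I t - I s) - (Y s (X t - X s) + Y' s (XX s t))‖ ≤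
          C * (t - s) ^ β * (KX + KXX) * KY := by
  have hα0 : ∀ s, 0 ≤ s → s ≤ T → 0 < α s := fun s hs hsT ↦ by linarith [hα s ⟨hs, hsT⟩]
  have hX' := norm_le_mul_rpow_of_forall_lt (f := fun s t ↦ X t - X s) hα0
    (fun _ _ _ ↦ sub_self _) hX
  have hXX' := norm_le_mul_rpow_of_forall_lt (f := XX) (a := fun s ↦ min (2 * α s) 1)
    (fun s hs hsT ↦ lt_min (by linarith [hα0 s hs hsT]) one_pos)
    (fun s hs hsT ↦ by simpa [tensor_zero_left] using hChen s s s hs le_rfl le_rfl hsT) hXX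
  have hY'' := norm_le_mul_rpow_of_forall_lt (f := fun s t ↦ Y' t - Y' s) hα0
    (fun _ _ _ ↦ sub_self _) hY'
  have hR' := norm_le_mul_rpow_of_forall_lt (f := R) (a := fun s ↦ 2 * α s)
    (fun s hs hsT ↦ by linarith [hα0 s hs hsT])
    (fun s hs hsT ↦ by ext1 v; simpa [tensor_zero_left] using (hctrl s s hs le_rfl hsT v).symm) hR
  set L := max 1 T
  have hdefect : Sewing.DefectBound (compensatedGerm X XX Y Y') T
      (L ^ (2 : ℝ) * ((KX + KXX) * KY)) β := fun s u t hs hsu hut htT ↦ by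
    have hsT : s ∈ Set.Icc 0 T := ⟨hs, hsu.trans (hut.trans htT)⟩
    have huT : u ∈ Set.Icc 0 T := ⟨hs.trans hsu, hut.trans htT⟩
    exact norm_compensatedGerm_defect_le hsu hut (by linarith [le_max_right 1 T])
      (le_max_left 1 T) hβ (hα s hsT).2 (hα u huT).2 (hβle s hsT).1 (hβle u huT).1
      (hβle s hsT).2 hKX hKXX hKY (hX' u t huT.1 hut htT) (hXX' u t huT.1 hut htT)
      (hY'' s u hs hsu huT.2) (hR' s u hs hsu huT.2) (hctrl s u hs hsu huT.2 _)
      (hChen s u t hs hsu hut htT)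
  have hL : 0 < L ^ (2 : ℝ) := Real.rpow_pos_of_pos (one_pos.trans_le (le_max_left 1 T)) _
  obtain ⟨C, hC, I, hI0, hI⟩ :=
    Sewing.exists_sewing hdefect hβ (mul_nonneg hL.le (mul_nonneg (add_nonneg hKX hKXX) hKY))
  exact ⟨C * L ^ (2 : ℝ), mul_pos hC hL, I, hI0, fun s t hs hst htT ↦
    (hI s t hs hst htT).trans_eq (by ring)⟩

/-- Variable order rough integration of a controlled path against a variable order rough
path: the compensated Riemann–Stieltjes germ `Ξ(s,t) = Y_s X_{s,t} + Y′_s 𝕏_{s,t}` can be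
sewn, with the usual rough integral estimate of variable order. -/
theorem stmt13 {d n : ℕ} (T : ℝ) (hT : 0 < T)
    (α : ℝ → ℝ) (hα : ∀ t ∈ Set.Icc (0:ℝ) T, 1/3 < α t ∧ α t < 1)
    (β : ℝ) (hβ : 1 < β)
    (hβle : ∀ t ∈ Set.Icc (0:ℝ) T, β ≤ 3 * α t ∧ β ≤ 1 + α t)
    (X : ℝ → EuclideanSpace ℝ (Fin d))
    (XX : ℝ → ℝ → EuclideanSpace ℝ (Fin d × Fin d))
    (KX KXX : ℝ) (hKX : 0 ≤ KX) (hKXX : 0 ≤ KXX)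
    (hX : ∀ s t : ℝ, 0 ≤ s → s < t → t ≤ T → ‖X t - X s‖ ≤ KX * (t - s) ^ α s)
    (hXX : ∀ s t : ℝ, 0 ≤ s → s < t → t ≤ T →
      ‖XX s t‖ ≤ KXX * (t - s) ^ min (2 * α s) 1)
    (hChen : ∀ s u t : ℝ, 0 ≤ s → s ≤ u → u ≤ t → t ≤ T →
      XX s t - XX s u - XX u t = tensor (X u - X s) (X t - X u))
    (Y : ℝ → (EuclideanSpace ℝ (Fin d) →L[ℝ] EuclideanSpace ℝ (Fin n)))
    (Y' : ℝ → (EuclideanSpace ℝ (Fin d × Fin d) →L[ℝ] EuclideanSpace ℝ (Fin n)))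
    (R : ℝ → ℝ → (EuclideanSpace ℝ (Fin d) →L[ℝ] EuclideanSpace ℝ (Fin n)))
    (hctrl : ∀ s t : ℝ, 0 ≤ s → s ≤ t → t ≤ T → ∀ v : EuclideanSpace ℝ (Fin d),
      Y t v - Y s v = Y' s (tensor (X t - X s) v) + R s t v)
    (KY : ℝ) (hKY : 0 ≤ KY)
    (hY' : ∀ s t : ℝ, 0 ≤ s → s < t → t ≤ T → ‖Y' t - Y' s‖ ≤ KY * (t - s) ^ α s)
    (hR : ∀ s t : ℝ, 0 ≤ s → s < t → t ≤ T → ‖R s t‖ ≤ KY * (t - s) ^ (2 * α s)) :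
    ∃ C > (0:ℝ), ∃ I : ℝ → EuclideanSpace ℝ (Fin n), I 0 = 0 ∧
      ∀ s t : ℝ, 0 ≤ s → s ≤ t → t ≤ T →
        ‖(I t - I s) - (Y s (X t - X s) + Y' s (XX s t))‖ ≤
          C * (t - s) ^ β * (KX + KXX) * KY :=
  stmt13_general T α hα β hβ hβle X XX KX KXX hKX hKXX hX hXX hChen Y Y' R hctrl KY hKY hY' hR
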